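/- The MaxNash rule is reverse stable: for every profile P, MaxNash(P) = MaxNash(P̄), where P̄ is the profile obtained from P by reversing every voter's ranking (the candidate at position i moves to position m+1−i). -/
import Mathlib


open Finset

/-- A profile assigns to each voter a ranking of the `m` candidates, i.e. a bijection
from the candidate set `C` to the positions `Fin m` (position `0` = most preferred,
so the 1-based position of `a` in the ranking `r` is `(r a : ℕ) + 1`). -/
abbrev Profile (V C : Type*) (m : ℕ) := V → C ≃ Fin m

/-- `dpos r a b` is `v(ab) = v(b) - v(a)`, the signed difference of the positions of
`b` and `a` in the ranking `r` (the `+1` shifts cancel). -/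
def dpos {C : Type*} {m : ℕ} (r : C ≃ Fin m) (a b : C) : ℤ :=
  ((r b : ℕ) : ℤ) - ((r a : ℕ) : ℤ)

/-- `Vab P a b` is `V^{a≻b}`, the set of voters that prefer `a` to `b`. -/
def Vab {V C : Type*} {m : ℕ} [Fintype V] (P : Profile V C m) (a b : C) : Finset V :=
  Finset.univ.filter (fun v => P v a < P v b)

/-- The MaxNash score of the pair `{a,b}`:
`(Σ_{v∈V^{a≻b}} v(ab)) · (Σ_{v∈V^{b≻a}} v(ba))`. -/
def nashScore {V C : Type*} {m : ℕ} [Fintype V] (P : Profile V C m) (a b : C) : ℤ :=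
  (∑ v ∈ Vab P a b, dpos (P v) a b) * ∑ v ∈ Vab P b a, dpos (P v) b a

/-- `{a,b} ∈ MaxNash(P)`: a pair of distinct candidates whose MaxNash score is maximal
among all pairs of distinct candidates. -/
def maxNashSel {V C : Type*} {m : ℕ} [Fintype V] (P : Profile V C m) (a b : C) : Prop :=
  a ≠ b ∧ ∀ x y : C, x ≠ y → nashScore P x y ≤ nashScore P a b

/-- The reversed profile: every voter's ranking is reversed, i.e., the candidate at
position `i` (1-based) moves to position `m + 1 - i`. -/
def reverseProfile {V C : Type*} {m : ℕ} (P : Profile V C m) : Profile V C m :=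
  fun v => (P v).trans Fin.revPerm


lemma Vab_reverse {V C : Type*} {m : ℕ} [Fintype V] (P : Profile V C m) (a b : C) :
    Vab (reverseProfile P) a b = Vab P b a := by
  ext v
  simp only [Vab, reverseProfile, Finset.mem_filter, Finset.mem_univ, true_and,
    Equiv.trans_apply, Fin.revPerm_apply, Fin.rev_lt_rev]

lemma dpos_reverse {C : Type*} {m : ℕ} (r : C ≃ Fin m) (a b : C) :
    dpos (r.trans Fin.revPerm) a b = dpos r b a := by
  simp only [dpos, Equiv.trans_apply, Fin.revPerm_apply, Fin.val_rev]
  have ha := (r a).isLt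
  have hb := (r b).isLt
  omega

lemma nashScore_reverse {V C : Type*} {m : ℕ} [Fintype V] (P : Profile V C m) (a b : C) :
    nashScore (reverseProfile P) a b = nashScore P a b := by
  simp only [nashScore, Vab_reverse, reverseProfile, dpos_reverse]
  ring

/-- MaxNash is reverse stable: `MaxNash(P) = MaxNash(P̄)`, where `P̄`
is the profile with every voter's ranking reversed. -/
theorem maxNash_reverseStable {V C : Type*} [Fintype V] {m : ℕ} (P : Profile V C m)
    (a b : C) :
    maxNashSel P a b ↔ maxNashSel (reverseProfile P) a b := by
  unfold maxNashSel
  simp only [nashScore_reverse]
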